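/- Let K_1, …, K_n and L_1, …, L_m be fields of characteristic 0. There exists an injective Q-algebra homomorphism from the product ring K_1 × ⋯ × K_n into the product ring L_1 × ⋯ × L_m if and only if there exists a surjective map φ : {1, …, m} → {1, …, n} such that for every i ∈ {1, …, m} there exists a field embedding (i.e., an injective ring homomorphism) of K_{φ(i)} into L_i. -/
import Mathlib


/-- Let `K 1, …, K n` and `L 1, …, L m` be fields of characteristic 0.
There exists an injective `ℚ`-algebra homomorphism (equivalently, ring homomorphism)
from the product ring `K 1 × ⋯ × K n` into `L 1 × ⋯ × L m` if and only if there is a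
surjective map `φ : Fin m → Fin n` such that for every `i`, there is a field embedding
(injective ring homomorphism) of `K (φ i)` into `L i`. -/
theorem product_of_fields_embedding_iff (n m : ℕ)
    (K : Fin n → Type*) (L : Fin m → Type*)
    [∀ i, Field (K i)] [∀ i, CharZero (K i)]
    [∀ j, Field (L j)] [∀ j, CharZero (L j)] :
    (∃ f : (∀ i, K i) →+* (∀ j, L j), Function.Injective f) ↔
      ∃ φ : Fin m → Fin n, Function.Surjective φ ∧
        ∀ i : Fin m, ∃ g : K (φ i) →+* L i, Function.Injective g := by
  constructor
  · rintro ⟨f, hf⟩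
    -- the image of each idempotent `Pi.single i 1` at coordinate `j` is `0` or `1`
    have hidem : ∀ (i : Fin n) (j : Fin m),
        f (Pi.single i 1) j = 0 ∨ f (Pi.single i 1) j = 1 := by
      intro i j
      have h1 : f (Pi.single i 1) j * f (Pi.single i 1) j = f (Pi.single i 1) j := by
        rw [← Pi.mul_apply, ← map_mul, ← Pi.single_mul, one_mul]
      rcases mul_eq_zero.mp (by linear_combination h1 :
          f (Pi.single i 1) j * (f (Pi.single i 1) j - 1) = 0) with h | h
      · exact Or.inl h
      · exact Or.inr (by linear_combination h)
    -- uniqueness: at most one `i` with image `1` at coordinate `j`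
    have huniq : ∀ (i i' : Fin n) (j : Fin m), f (Pi.single i 1) j = 1 →
        f (Pi.single i' 1) j = 1 → i = i' := by
      intro i i' j h h'
      by_contra hne
      have hz : (Pi.single i 1 : ∀ i, K i) * Pi.single i' 1 = 0 := by
        funext k
        rcases eq_or_ne k i with rfl | hk
        · simp [Pi.single_eq_of_ne hne]
        · simp [Pi.single_eq_of_ne hk]
      have : (1 : L j) = 0 := by
        calc (1 : L j) = f (Pi.single i 1) j * f (Pi.single i' 1) j := by rw [h, h', one_mul]
          _ = f (Pi.single i 1 * Pi.single i' 1) j := by rw [map_mul]; rfl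
          _ = 0 := by rw [hz, map_zero]; rfl
      exact one_ne_zero this
    -- existence: at least one `i` with image `1` at coordinate `j`
    have hex : ∀ j : Fin m, ∃ i : Fin n, f (Pi.single i 1) j = 1 := by
      intro j
      have hsum : ∑ i : Fin n, f (Pi.single i 1) j = 1 := by
        have : ∑ i : Fin n, (Pi.single i (1 : K i) : ∀ i, K i) = 1 :=
          Finset.univ_sum_single (1 : ∀ i, K i)
        calc ∑ i : Fin n, f (Pi.single i 1) j
            = (f (∑ i : Fin n, (Pi.single i (1 : K i) : ∀ i, K i))) j := by
              rw [map_sum, Finset.sum_apply]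
          _ = 1 := by rw [this, map_one]; rfl
      obtain ⟨i, _, hi⟩ := Finset.exists_ne_zero_of_sum_ne_zero
        (hsum ▸ one_ne_zero)
      exact ⟨i, (hidem i j).resolve_left hi⟩
    choose φ hφ using hex
    refine ⟨φ, ?_, ?_⟩
    · -- surjectivity
      intro i
      by_contra hni
      push_neg at hni
      have h0 : f (Pi.single i 1) = 0 := by
        funext j
        exact (hidem i j).resolve_right fun h => hni j (huniq (φ j) i j (hφ j) h)
      have : (Pi.single i (1 : K i) : ∀ i, K i) = 0 := hf (by rw [h0, map_zero])
      have h1 : (1 : K i) = 0 := by simpa using congrFun this i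
      exact one_ne_zero h1
    · -- construct the embeddings
      intro j
      refine ⟨{ toFun := fun a => f (Pi.single (φ j) a) j
                map_one' := hφ j
                map_mul' := fun a b => by
                  show f (Pi.single (φ j) (a * b)) j = _
                  rw [Pi.single_mul, map_mul]; rfl
                map_zero' := by
                  show f (Pi.single (φ j) 0) j = 0
                  rw [Pi.single_zero, map_zero]; rfl
                map_add' := fun a b => by
                  show f (Pi.single (φ j) (a + b)) j = _
                  rw [Pi.single_add, map_add]; rfl }, ?_⟩
      exact RingHom.injective _
  · rintro ⟨φ, hsurj, hg⟩
    choose g hginj using hg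
    refine ⟨Pi.ringHom (fun j => (g j).comp (Pi.evalRingHom K (φ j))), ?_⟩
    intro x y hxy
    funext i
    obtain ⟨j, rfl⟩ := hsurj i
    exact hginj j (congrFun hxy j)
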